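/- Let α > 0 and Φ := I_{Nn} + 𝐖. Then the resolvent of Φ^{-1}A has full domain and is single-valued: for every 𝐱 ∈ ℝ^{Nn} there exists exactly one 𝐲 ∈ ℝ^{Nn} such that 0 ∈ Φ(𝐲 − 𝐱) + F_a(𝐲) + N_𝛀(𝐲). -/

import Mathlib

open scoped InnerProductSpace

/-- The strategy-profile space `ℝ^n = ℝ^{n_1} × ⋯ × ℝ^{n_N}`, with the Euclidean (ℓ²)
structure. Block `i` is agent `i`'s strategy space `ℝ^{n_i}`. -/
abbrev Prof (N : ℕ) (d : Fin N → ℕ) : Type :=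
  PiLp 2 (fun i : Fin N => EuclideanSpace ℝ (Fin (d i)))

/-- The stacked space `ℝ^{Nn}` of all agents' estimates; block `i` is agent `i`'s estimate
`𝐱_i ∈ ℝ^n` of the full strategy profile. -/
abbrev Est (N : ℕ) (d : Fin N → ℕ) : Type :=
  PiLp 2 (fun _ : Fin N => Prof N d)

/-- The pseudo-gradient `F(x) := col(∇_{x_i} J_i(x_i, x_{−i}))_i`, built from the partial
gradients `G i`. -/
noncomputable def pseudoGrad {N : ℕ} {d : Fin N → ℕ}
    (G : ∀ i : Fin N, Prof N d → EuclideanSpace ℝ (Fin (d i)))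
    (x : Prof N d) : Prof N d :=
  WithLp.toLp 2 (fun i => G i x)

/-- The extended pseudo-gradient `𝐅(𝐱) := col(∇_{x_i} J_i(𝐱_{i,i}, 𝐱_{i,−i}))_i`. -/
noncomputable def extPseudoGrad {N : ℕ} {d : Fin N → ℕ}
    (G : ∀ i : Fin N, Prof N d → EuclideanSpace ℝ (Fin (d i)))
    (bx : Est N d) : Prof N d :=
  WithLp.toLp 2 (fun i => G i (bx i))

/-- `Rᵀ` places block `i` of `v ∈ ℝ^n` in the `(i,i)`-block position of `ℝ^{Nn}`,
with zeros elsewhere. -/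
noncomputable def RT {N : ℕ} {d : Fin N → ℕ} (v : Prof N d) : Est N d :=
  WithLp.toLp 2 (fun i => WithLp.toLp 2 (Function.update (0 : Prof N d) i (v i)))

/-- `𝐖 = W ⊗ I_n` acting blockwise: `(𝐖𝐱)_i = Σ_j w_{ij} 𝐱_j`. -/
noncomputable def Wact {N : ℕ} {d : Fin N → ℕ} (W : Matrix (Fin N) (Fin N) ℝ) (bx : Est N d) : Est N d :=
  WithLp.toLp 2 (fun i => ∑ j, W i j • bx j)

/-- `F_a(𝐱) := α Rᵀ𝐅(𝐱) + (I_{Nn} − 𝐖)𝐱`. -/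
noncomputable def Fa {N : ℕ} {d : Fin N → ℕ} (α : ℝ)
    (G : ∀ i : Fin N, Prof N d → EuclideanSpace ℝ (Fin (d i)))
    (W : Matrix (Fin N) (Fin N) ℝ) (bx : Est N d) : Est N d :=
  α • RT (extPseudoGrad G bx) + (bx - Wact W bx)

/-- `𝛀 := {𝐱 ∈ ℝ^{Nn} : 𝐱_{i,i} ∈ Ω_i for all i}`. -/
def bigOmega {N : ℕ} {d : Fin N → ℕ}
    (Ω : ∀ i : Fin N, Set (EuclideanSpace ℝ (Fin (d i)))) : Set (Est N d) :=
  {bx | ∀ i, bx i i ∈ Ω i}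

/-- Normal cone operator of a closed convex set `S` at `x`
(empty if `x ∉ S`). -/
def normalCone {E : Type*} [NormedAddCommGroup E] [InnerProductSpace ℝ E]
    (S : Set E) (x : E) : Set E :=
  {v | x ∈ S ∧ ∀ z ∈ S, ⟪v, z - x⟫_ℝ ≤ 0}

/-- The consensus subspace `E_n := {𝟏_N ⊗ y : y ∈ ℝ^n} ⊆ ℝ^{Nn}`. -/
def consensus (N : ℕ) (d : Fin N → ℕ) : Set (Est N d) :=
  {bx | ∃ y : Prof N d, ∀ i, bx i = y}

/-- The preconditioning matrix `Φ := I_{Nn} + 𝐖`, as an operator on `ℝ^{Nn}`. -/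
noncomputable def PhiOp {N : ℕ} {d : Fin N → ℕ} (W : Matrix (Fin N) (Fin N) ℝ)
    (bx : Est N d) : Est N d :=
  bx + Wact W bx

/-!
Since `Φ(𝐲 - 𝐱) + F_a(𝐲) = 2𝐲 + α Rᵀ𝐅(𝐲) - Φ𝐱`, the matrix `𝐖` drops out, and since `𝛀`
constrains only the diagonal blocks `𝐲_{i,i}`, the normal cone `N_𝛀` vanishes off the diagonal.
So the off-diagonal blocks of a solution are forced to be `(Φ𝐱)_{i,j} / 2`, and each diagonal
block solves, on `Ω_i`, the variational inequality of `s ↦ 2s + α ∇_{x_i}J_i(s, ·) - (Φ𝐱)_{i,i}`,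
which is strongly monotone and Lipschitz because `F` is. Such a variational inequality has exactly
one solution: for small `t > 0` the map `y ↦ P_{Ω_i}(y - t S y)` is a contraction.
-/

open scoped NNReal

section NormalCone

variable {E : Type*} [NormedAddCommGroup E] [InnerProductSpace ℝ E] {K : Set E}

lemma inner_sub_nonneg_of_mem_normalCone {v v' x x' : E} (hv : v ∈ normalCone K x)
    (hv' : v' ∈ normalCone K x') : 0 ≤ ⟪v - v', x - x'⟫_ℝ := by
  have h := hv.2 x' hv'.1
  have h' := hv'.2 x hv.1
  rw [← neg_sub, inner_neg_right] at h
  rw [inner_sub_left]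
  linarith

lemma smul_mem_normalCone_iff {t : ℝ} (ht : 0 < t) {v x : E} :
    t • v ∈ normalCone K x ↔ v ∈ normalCone K x := by
  have hscale (a : ℝ) : t * a ≤ 0 ↔ a ≤ 0 := by
    constructor <;> intro h <;> nlinarith
  simp only [normalCone, Set.mem_ofPred_eq, real_inner_smul_left, hscale]

lemma mem_normalCone_univ {v x : E} : v ∈ normalCone Set.univ x ↔ v = 0 := by
  refine ⟨fun h => ?_, fun h => ⟨trivial, fun z _ => by simp [h]⟩⟩
  have := h.2 (x + v) trivial
  rwa [add_sub_cancel_left, real_inner_self_nonpos] at this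

lemma exists_sub_mem_normalCone [CompleteSpace E] (hne : K.Nonempty) (hcl : IsClosed K)
    (hconv : Convex ℝ K) : ∃ P : E → E, ∀ u, u - P u ∈ normalCone K (P u) := by
  have h (u : E) : ∃ p, u - p ∈ normalCone K p := by
    obtain ⟨p, hp, hmin⟩ := exists_norm_eq_iInf_of_complete_convex hne hcl.isComplete hconv u
    exact ⟨p, hp, (norm_eq_iInf_iff_real_inner_le_zero hconv hp).1 hmin⟩
  choose P hP using h
  exact ⟨P, hP⟩

lemma lipschitzWith_one_of_sub_mem_normalCone {P : E → E}
    (hP : ∀ u, u - P u ∈ normalCone K (P u)) : LipschitzWith 1 P := by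
  refine LipschitzWith.of_dist_le_mul fun u u' => ?_
  rw [dist_eq_norm, dist_eq_norm, NNReal.coe_one, one_mul]
  have hmono := inner_sub_nonneg_of_mem_normalCone (hP u) (hP u')
  rw [show u - P u - (u' - P u') = (u - u') - (P u - P u') by abel, inner_sub_left,
    real_inner_self_eq_norm_sq] at hmono
  have hcs := real_inner_le_norm (u - u') (P u - P u')
  nlinarith [norm_nonneg (P u - P u'), norm_nonneg (u - u')]

-- the step `t = m / (L² + m²)` makes `1 - 2tm + t²L² ≤ L² / (L² + m²)`
lemma exists_contractingWith_sub_smul {S : E → E} {m : ℝ} {L : ℝ≥0} (hm : 0 < m)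
    (hmon : ∀ y z, m * ‖y - z‖ ^ 2 ≤ ⟪S y - S z, y - z⟫_ℝ) (hlip : LipschitzWith L S) :
    ∃ t : ℝ, 0 < t ∧ ∃ q : ℝ≥0, ContractingWith q (fun y => y - t • S y) := by
  set D : ℝ := L ^ 2 + m ^ 2
  have hD : 0 < D := by positivity
  set q : ℝ := L / √D
  have hq : q < 1 := by
    rw [div_lt_one (by positivity), Real.lt_sqrt L.coe_nonneg]
    simp only [D]; linarith [pow_pos hm 2]
  refine ⟨m / D, by positivity, q.toNNReal, by simpa using hq, ?_⟩
  refine LipschitzWith.of_dist_le' fun y z => ?_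
  rw [dist_eq_norm, dist_eq_norm]
  have hSlip : ‖S y - S z‖ ≤ L * ‖y - z‖ := by
    simpa only [dist_eq_norm] using hlip.dist_le_mul y z
  have h2 : ‖S y - S z‖ ^ 2 ≤ L ^ 2 * ‖y - z‖ ^ 2 := by
    rw [← mul_pow]; exact pow_le_pow_left₀ (norm_nonneg _) hSlip 2
  have hq2 : q ^ 2 = L ^ 2 / D := by rw [div_pow, Real.sq_sqrt hD.le]
  have hsq : ‖y - (m / D) • S y - (z - (m / D) • S z)‖ ^ 2 ≤ (q * ‖y - z‖) ^ 2 := by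
    rw [show y - (m / D) • S y - (z - (m / D) • S z) = (y - z) - (m / D) • (S y - S z) by
      rw [smul_sub]; abel, norm_sub_sq_real, norm_smul, real_inner_smul_right,
      Real.norm_of_nonneg (by positivity), mul_pow, mul_pow, hq2, real_inner_comm]
    calc ‖y - z‖ ^ 2 - 2 * (m / D * ⟪S y - S z, y - z⟫_ℝ) + (m / D) ^ 2 * ‖S y - S z‖ ^ 2
        ≤ ‖y - z‖ ^ 2 - 2 * (m / D * (m * ‖y - z‖ ^ 2)) + (m / D) ^ 2 * (L ^ 2 * ‖y - z‖ ^ 2) := by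
          gcongr
          exact hmon y z
      _ = L ^ 2 / D * ‖y - z‖ ^ 2 - (m ^ 2 / D) ^ 2 * ‖y - z‖ ^ 2 := by
          simp only [D]; field_simp; ring
      _ ≤ L ^ 2 / D * ‖y - z‖ ^ 2 := by
          have := sq_nonneg (m ^ 2 / D); have := sq_nonneg ‖y - z‖; nlinarith
  exact pow_le_pow_iff_left₀ (norm_nonneg _) (by positivity) two_ne_zero |>.1 hsq

theorem existsUnique_neg_mem_normalCone [CompleteSpace E] (hne : K.Nonempty)
    (hcl : IsClosed K) (hconv : Convex ℝ K) {S : E → E} {m : ℝ} {L : ℝ≥0} (hm : 0 < m)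
    (hmon : ∀ y z, m * ‖y - z‖ ^ 2 ≤ ⟪S y - S z, y - z⟫_ℝ) (hlip : LipschitzWith L S) :
    ∃! y, -S y ∈ normalCone K y := by
  refine existsUnique_of_exists_of_unique ?_ fun y y' hy hy' => ?_
  · obtain ⟨P, hP⟩ := exists_sub_mem_normalCone hne hcl hconv
    obtain ⟨t, ht, q, hq⟩ := exists_contractingWith_sub_smul hm hmon hlip
    have hPq : ContractingWith q (fun y => P (y - t • S y)) := ⟨hq.1, by
      simpa [Function.comp_def] using (lipschitzWith_one_of_sub_mem_normalCone hP).comp hq.2⟩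
    -- `y = P (y - t • S y)` says `-t • S y ∈ N_K(y)`
    obtain ⟨y, hy : P (y - t • S y) = y, -⟩ := hPq.exists_fixedPoint 0 (edist_ne_top _ _)
    have := hP (y - t • S y)
    rw [hy, sub_sub_cancel_left, ← smul_neg, smul_mem_normalCone_iff ht] at this
    exact ⟨y, this⟩
  · have hmono := inner_sub_nonneg_of_mem_normalCone hy hy'
    rw [neg_sub_neg, ← neg_sub, inner_neg_left] at hmono
    have hnorm : ‖y - y'‖ ^ 2 ≤ 0 := by nlinarith [hmon y y']
    simpa [sub_eq_zero] using hnorm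

end NormalCone

section PiLp

variable {ι : Type*} {β : ι → Type*}

lemma PiLp.existsUnique_forall {p : ENNReal} {P : ∀ i, β i → Prop} (h : ∀ i, ∃! b, P i b) :
    ∃! x : PiLp p β, ∀ i, P i (x i) := by
  choose f hf huniq using h
  exact ⟨WithLp.toLp p f, hf, fun y hy => PiLp.ext fun i => huniq i _ (hy i)⟩

variable [DecidableEq ι]

lemma existsUnique_of_existsUnique_update {p : ENNReal} (u : PiLp p β) (i : ι)
    {R : PiLp p β → Prop} (h : ∃! s : β i, R (WithLp.toLp p (Function.update u i s))) :
    ∃! v, R v ∧ ∀ j ≠ i, v j = u j := by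
  obtain ⟨s, hs, huniq⟩ := h
  refine ⟨WithLp.toLp p (Function.update u i s), ⟨hs, fun j hj => by simp [hj]⟩, ?_⟩
  rintro v ⟨hv, hvu⟩
  have hv_eq : v = WithLp.toLp p (Function.update u i (v i)) := by
    ext j
    by_cases hj : j = i
    · subst hj; simp
    · simp [hj, hvu j hj]
  have hvs : v i = s := huniq (v i) (by beta_reduce; rwa [← hv_eq])
  rw [hv_eq, hvs]

variable [∀ i, NormedAddCommGroup (β i)]

lemma toLp_update_sub_toLp_update (x : PiLp 2 β) (i : ι) (a b : β i) :
    WithLp.toLp 2 (Function.update x i a) - WithLp.toLp 2 (Function.update x i b) =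
      PiLp.single 2 i (a - b) := by
  ext j
  by_cases hj : j = i
  · subst hj; simp
  · simp [hj]

variable [Fintype ι] [∀ i, InnerProductSpace ℝ (β i)]

lemma PiLp.inner_single_left (i : ι) (a : β i) (v : PiLp 2 β) :
    ⟪PiLp.single 2 i a, v⟫_ℝ = ⟪a, v i⟫_ℝ := by
  rw [PiLp.inner_apply, Finset.sum_eq_single i
    (fun j _ hj => by rw [PiLp.single_eq_of_ne 2 hj, inner_zero_left]) (by simp),
    PiLp.single_eq_same]

lemma mem_normalCone_pi_iff (K : ∀ i, Set (β i)) {x w : PiLp 2 β} :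
    w ∈ normalCone {x : PiLp 2 β | ∀ i, x i ∈ K i} x ↔ ∀ i, w i ∈ normalCone (K i) (x i) := by
  constructor
  · rintro ⟨hx, hw⟩ i
    refine ⟨hx i, fun s hs => ?_⟩
    have hmem : x + PiLp.single 2 i (s - x i) ∈ {x : PiLp 2 β | ∀ i, x i ∈ K i} := by
      intro j
      by_cases hj : j = i
      · subst hj; simpa using hs
      · simpa [PiLp.single_eq_of_ne 2 hj] using hx j
    have := hw _ hmem
    rwa [add_sub_cancel_left, real_inner_comm, PiLp.inner_single_left, real_inner_comm] at this
  · intro hw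
    refine ⟨fun i => (hw i).1, fun z hz => ?_⟩
    rw [PiLp.inner_apply]
    exact Finset.sum_nonpos fun i _ => (hw i).2 (z i) (hz i)

lemma mem_normalCone_setOf_apply_mem_iff (i : ι) (K : Set (β i)) {x w : PiLp 2 β} :
    w ∈ normalCone {x : PiLp 2 β | x i ∈ K} x ↔
      w i ∈ normalCone K (x i) ∧ ∀ j ≠ i, w j = 0 := by
  have hcyl : {x : PiLp 2 β | x i ∈ K} =
      {x : PiLp 2 β | ∀ j, x j ∈ Function.update (fun j => Set.univ) i K j} := by
    ext x
    simp only [Set.mem_ofPred_eq,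
      Function.forall_update_iff _ (fun j (S : Set (β j)) => x j ∈ S), Set.mem_univ,
      implies_true, and_true]
  rw [hcyl, mem_normalCone_pi_iff,
    Function.forall_update_iff _ (fun j (S : Set (β j)) => w j ∈ normalCone S (x j))]
  simp only [mem_normalCone_univ]

end PiLp

section Game

variable {N : ℕ} {d : Fin N → ℕ}

lemma Wact_sub (W : Matrix (Fin N) (Fin N) ℝ) (x y : Est N d) :
    Wact W (x - y) = Wact W x - Wact W y := by
  ext i : 1
  simp [Wact, smul_sub, Finset.sum_sub_distrib]

lemma extPseudoGrad_apply (G : ∀ i : Fin N, Prof N d → EuclideanSpace ℝ (Fin (d i)))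
    (y : Est N d) (i : Fin N) : extPseudoGrad G y i = G i (y i) :=
  rfl

lemma RT_apply_self (v : Prof N d) (i : Fin N) : RT v i i = v i := by
  simp [RT]

lemma RT_apply_of_ne (v : Prof N d) {i j : Fin N} (h : j ≠ i) : RT v i j = 0 := by
  simp [RT, h]

lemma PhiOp_sub_add_Fa (W : Matrix (Fin N) (Fin N) ℝ) (α : ℝ)
    (G : ∀ i : Fin N, Prof N d → EuclideanSpace ℝ (Fin (d i))) (x y : Est N d) :
    PhiOp W (y - x) + Fa α G W y = (2 : ℝ) • y + α • RT (extPseudoGrad G y) - PhiOp W x := by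
  simp only [PhiOp, Fa, Wact_sub]
  rw [two_smul]
  abel

lemma mem_normalCone_bigOmega_iff (Ω : ∀ i : Fin N, Set (EuclideanSpace ℝ (Fin (d i))))
    {y w : Est N d} :
    w ∈ normalCone (bigOmega Ω) y ↔
      ∀ i, w i i ∈ normalCone (Ω i) (y i i) ∧ ∀ j ≠ i, w i j = 0 :=
  (mem_normalCone_pi_iff fun i => {v : Prof N d | v i ∈ Ω i}).trans
    (forall_congr' fun i =>
      mem_normalCone_setOf_apply_mem_iff (β := fun i => EuclideanSpace ℝ (Fin (d i))) i (Ω i))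

variable {G : ∀ i : Fin N, Prof N d → EuclideanSpace ℝ (Fin (d i))}

lemma le_inner_sub_pseudoGrad_update {μ : ℝ}
    (hFmon : ∀ x y : Prof N d, ⟪x - y, pseudoGrad G x - pseudoGrad G y⟫_ℝ ≥ μ * ‖x - y‖ ^ 2)
    (x : Prof N d) (i : Fin N) (s t : EuclideanSpace ℝ (Fin (d i))) :
    μ * ‖s - t‖ ^ 2 ≤ ⟪G i (WithLp.toLp 2 (Function.update x i s)) -
      G i (WithLp.toLp 2 (Function.update x i t)), s - t⟫_ℝ := by
  have := hFmon (WithLp.toLp 2 (Function.update x i s)) (WithLp.toLp 2 (Function.update x i t))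
  rwa [toLp_update_sub_toLp_update, PiLp.inner_single_left, PiLp.norm_single,
    real_inner_comm] at this

lemma norm_sub_pseudoGrad_update_le {θ0 : ℝ}
    (hFlip : ∀ x y : Prof N d, ‖pseudoGrad G x - pseudoGrad G y‖ ≤ θ0 * ‖x - y‖)
    (x : Prof N d) (i : Fin N) (s t : EuclideanSpace ℝ (Fin (d i))) :
    ‖G i (WithLp.toLp 2 (Function.update x i s)) -
      G i (WithLp.toLp 2 (Function.update x i t))‖ ≤ θ0 * ‖s - t‖ := by
  calc _ = ‖(pseudoGrad G (WithLp.toLp 2 (Function.update x i s)) -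
          pseudoGrad G (WithLp.toLp 2 (Function.update x i t))) i‖ := rfl
    _ ≤ _ := PiLp.norm_apply_le _ _
    _ ≤ _ := hFlip _ _
    _ = θ0 * ‖s - t‖ := by rw [toLp_update_sub_toLp_update, PiLp.norm_single]

lemma existsUnique_agent_response {Ω : ∀ i : Fin N, Set (EuclideanSpace ℝ (Fin (d i)))}
    {i : Fin N} (hΩ : (Ω i).Nonempty ∧ IsClosed (Ω i) ∧ Convex ℝ (Ω i)) {μ θ0 α : ℝ}
    (hμ : 0 ≤ μ) (hα : 0 ≤ α)
    (hFmon : ∀ x y : Prof N d, ⟪x - y, pseudoGrad G x - pseudoGrad G y⟫_ℝ ≥ μ * ‖x - y‖ ^ 2)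
    (hFlip : ∀ x y : Prof N d, ‖pseudoGrad G x - pseudoGrad G y‖ ≤ θ0 * ‖x - y‖)
    (c : Est N d) :
    ∃! v : Prof N d, c i i - (2 : ℝ) • v i - α • G i v ∈ normalCone (Ω i) (v i) ∧
      ∀ j ≠ i, v j = ((2 : ℝ)⁻¹ • c i) j := by
  set u : Prof N d := (2 : ℝ)⁻¹ • c i
  apply existsUnique_of_existsUnique_update
  set g := fun s => G i (WithLp.toLp 2 (Function.update u i s))
  set S := fun s => (2 : ℝ) • s + α • g s - c i i
  have hS (s t : EuclideanSpace ℝ (Fin (d i))) :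
      S s - S t = (2 : ℝ) • (s - t) + α • (g s - g t) := by
    simp only [S, smul_sub]; abel
  have hmon (s t : EuclideanSpace ℝ (Fin (d i))) : 2 * ‖s - t‖ ^ 2 ≤ ⟪S s - S t, s - t⟫_ℝ := by
    rw [hS, inner_add_left, real_inner_smul_left, real_inner_smul_left,
      real_inner_self_eq_norm_sq]
    have := le_inner_sub_pseudoGrad_update hFmon u i s t
    have : 0 ≤ μ * ‖s - t‖ ^ 2 := by positivity
    nlinarith
  have hlip : LipschitzWith (2 + α * θ0).toNNReal S := by
    refine LipschitzWith.of_dist_le' fun s t => ?_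
    rw [dist_eq_norm, dist_eq_norm, hS]
    calc _ ≤ ‖(2 : ℝ) • (s - t)‖ + ‖α • (g s - g t)‖ := norm_add_le _ _
      _ ≤ 2 * ‖s - t‖ + α * (θ0 * ‖s - t‖) := by
          rw [norm_smul, norm_smul, Real.norm_two, Real.norm_of_nonneg hα]
          gcongr
          exact norm_sub_pseudoGrad_update_le hFlip _ i s t
      _ = (2 + α * θ0) * ‖s - t‖ := by ring
  simp only [Function.update_self, sub_sub]
  simpa only [S, neg_sub] using
    existsUnique_neg_mem_normalCone hΩ.1 hΩ.2.1 hΩ.2.2 two_pos hmon hlip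

lemma resolvent_inclusion_iff (Ω : ∀ i : Fin N, Set (EuclideanSpace ℝ (Fin (d i))))
    (W : Matrix (Fin N) (Fin N) ℝ) (α : ℝ) (x y : Est N d) :
    (∃ w ∈ normalCone (bigOmega Ω) y, PhiOp W (y - x) + Fa α G W y + w = 0) ↔
      ∀ i, PhiOp W x i i - (2 : ℝ) • y i i - α • G i (y i) ∈ normalCone (Ω i) (y i i) ∧
        ∀ j ≠ i, y i j = ((2 : ℝ)⁻¹ • PhiOp W x i) j := by
  have hw (w : Est N d) : PhiOp W (y - x) + Fa α G W y + w = 0 ↔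
      w = PhiOp W x - ((2 : ℝ) • y + α • RT (extPseudoGrad G y)) := by
    rw [PhiOp_sub_add_Fa, add_eq_zero_iff_eq_neg', neg_sub]
  simp only [hw, exists_eq_right, mem_normalCone_bigOmega_iff]
  refine forall_congr' fun i => and_congr ?_ (forall₂_congr fun j hj => ?_)
  · simp only [PiLp.sub_apply, PiLp.add_apply, PiLp.smul_apply, RT_apply_self,
      extPseudoGrad_apply, sub_sub]
  · simp only [PiLp.sub_apply, PiLp.add_apply, PiLp.smul_apply, RT_apply_of_ne _ hj, smul_zero,
      add_zero, sub_eq_zero]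
    rw [eq_inv_smul_iff₀ two_ne_zero, eq_comm]

end Game

theorem stmt12_general {N : ℕ} {d : Fin N → ℕ}
    (Ω : ∀ i : Fin N, Set (EuclideanSpace ℝ (Fin (d i))))
    (hΩ : ∀ i, (Ω i).Nonempty ∧ IsClosed (Ω i) ∧ Convex ℝ (Ω i))
    (G : ∀ i : Fin N, Prof N d → EuclideanSpace ℝ (Fin (d i)))
    (μ θ0 : ℝ) (hμ : 0 < μ)
    (hFmon : ∀ x y : Prof N d,
      ⟪x - y, pseudoGrad G x - pseudoGrad G y⟫_ℝ ≥ μ * ‖x - y‖ ^ 2)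
    (hFlip : ∀ x y : Prof N d, ‖pseudoGrad G x - pseudoGrad G y‖ ≤ θ0 * ‖x - y‖)
    (W : Matrix (Fin N) (Fin N) ℝ)
    (α : ℝ) (hα : 0 < α) :
    ∀ bx : Est N d, ∃! bx' : Est N d,
      ∃ w ∈ normalCone (bigOmega Ω) bx',
        PhiOp W (bx' - bx) + Fa α G W bx' + w = 0 := by
  intro x
  rw [existsUnique_congr (resolvent_inclusion_iff Ω W α x)]
  exact PiLp.existsUnique_forall fun i =>
    existsUnique_agent_response (hΩ i) hμ.le hα.le hFmon hFlip (PhiOp W x)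

/-- Remark 2 of the paper. Under the standing assumptions, for any
`α > 0` and `Φ := I_{Nn} + 𝐖`, the resolvent `J_{Φ⁻¹A}` of `Φ⁻¹A`, with `A = F_a + N_𝛀`,
has full domain and is single-valued: for every `𝐱` there is exactly one `𝐲` with
`0 ∈ Φ(𝐲 − 𝐱) + F_a(𝐲) + N_𝛀(𝐲)`. -/
theorem stmt12 {N : ℕ} {d : Fin N → ℕ}
    (Ω : ∀ i : Fin N, Set (EuclideanSpace ℝ (Fin (d i))))
    (hΩ : ∀ i, (Ω i).Nonempty ∧ IsClosed (Ω i) ∧ Convex ℝ (Ω i))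
    (J : ∀ _ : Fin N, Prof N d → ℝ)
    (hJcont : ∀ i, Continuous (J i))
    (hJconv : ∀ i (x : Prof N d),
      ConvexOn ℝ Set.univ (fun y => J i (WithLp.toLp 2 (Function.update x i y))))
    (G : ∀ i : Fin N, Prof N d → EuclideanSpace ℝ (Fin (d i)))
    (hGgrad : ∀ i (x : Prof N d),
      HasGradientAt (fun y => J i (WithLp.toLp 2 (Function.update x i y))) (G i x) (x i))
    (μ θ0 : ℝ) (hμ : 0 < μ) (hθ0 : 0 < θ0)
    (hFmon : ∀ x y : Prof N d,
      ⟪x - y, pseudoGrad G x - pseudoGrad G y⟫_ℝ ≥ μ * ‖x - y‖ ^ 2)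
    (hFlip : ∀ x y : Prof N d, ‖pseudoGrad G x - pseudoGrad G y‖ ≤ θ0 * ‖x - y‖)
    (W : Matrix (Fin N) (Fin N) ℝ)
    (hWsymm : W.IsSymm) (hWnonneg : ∀ i j, 0 ≤ W i j)
    (hWstoch : ∀ i, ∑ j, W i j = 1) (hWdiag : ∀ i, 0 < W i i)
    (α : ℝ) (hα : 0 < α) :
    ∀ bx : Est N d, ∃! bx' : Est N d,
      ∃ w ∈ normalCone (bigOmega Ω) bx',
        PhiOp W (bx' - bx) + Fa α G W bx' + w = 0 :=
  stmt12_general Ω hΩ G μ θ0 hμ hFmon hFlip W α hα
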